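/- Let g ∈ L²(ℝ). Then the family of modulations {g_k}_{k∈ℤ}, where g_k(x) = e^{2πikx} g(x), is orthonormal in L²(ℝ) if and only if ∑_{k ∈ ℤ} |g(x + k)|² = 1 for almost every x ∈ ℝ. -/

import Mathlib

/-!
Push the density `|g|²` down to the circle `ℝ/ℤ`: the finite measure
`μ_g = (↑)_* (|g|² dx)` has density `G(x) = ∑ₖ |g(x+k)|²` with respect to Haar measure, and its
`n`-th Fourier–Stieltjes coefficient is `⟨g_k, g_{k+n}⟩`. So the modulations are orthonormal iff
`μ_g` has the Fourier coefficients of Haar measure, iff `μ_g` is Haar measure (trigonometric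
polynomials are dense in `C(ℝ/ℤ)`), iff `G = 1` almost everywhere.
-/

open MeasureTheory ComplexConjugate Set
open QuotientAddGroup (automorphize)
open scoped NNReal ENNReal Real

theorem MeasureTheory.MemLp.isFiniteMeasure_withDensity_enorm_sq {α E : Type*}
    [MeasurableSpace α] [NormedAddCommGroup E] {μ : Measure α} {g : α → E} (hg : MemLp g 2 μ) :
    IsFiniteMeasure (μ.withDensity fun x => ‖g x‖ₑ ^ 2) := by
  refine isFiniteMeasure_withDensity ?_
  simpa [hasFiniteIntegral_iff_enorm, enorm_pow] using
    (hg.integrable_norm_pow two_ne_zero).hasFiniteIntegral.ne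

theorem ENNReal.tsum_coe_eq_one_iff {ι : Type*} {f : ι → ℝ≥0} :
    ∑' i, (f i : ℝ≥0∞) = 1 ↔ ∑' i, (f i : ℝ) = 1 := by
  by_cases hf : Summable fun i => (f i : ℝ)
  · rw [← ENNReal.coe_tsum (NNReal.summable_coe.mp hf), ← NNReal.coe_tsum, ENNReal.coe_eq_one,
      NNReal.coe_eq_one]
  · rw [ENNReal.tsum_coe_eq_top_iff_not_summable_coe.mpr hf, tsum_eq_zero_of_not_summable hf]
    simp

namespace AddCircle

section Fourier

variable {T : ℝ} [Fact (0 < T)]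

theorem integral_eq_of_integral_fourier_eq {μ ν : Measure (AddCircle T)} [IsFiniteMeasure μ]
    [IsFiniteMeasure ν] (h : ∀ n : ℤ, ∫ y, fourier n y ∂μ = ∫ y, fourier n y ∂ν)
    (f : C(AddCircle T, ℂ)) : ∫ y, f y ∂μ = ∫ y, f y ∂ν := by
  let I (m : Measure (AddCircle T)) [IsFiniteMeasure m] : C(AddCircle T, ℂ) →L[ℂ] ℂ :=
    (L1.integralCLM' ℂ).comp (ContinuousMap.toLp 1 m ℂ)
  have hI (m : Measure (AddCircle T)) [IsFiniteMeasure m] (f : C(AddCircle T, ℂ)) :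
      I m f = ∫ y, f y ∂m := by
    rw [ContinuousLinearMap.comp_apply, ← L1.integral_eq', L1.integral_eq_integral]
    exact integral_congr_ae (ContinuousMap.coeFn_toLp (𝕜 := ℂ) m f)
  have hdense : Dense (Submodule.span ℂ (range (@fourier T)) : Set C(AddCircle T, ℂ)) :=
    Submodule.dense_iff_topologicalClosure_eq_top.mpr span_fourier_closure_eq_top
  have hIμν : I μ = I ν := ContinuousLinearMap.ext_on hdense <| by
    rintro _ ⟨n, rfl⟩
    simp only [hI, h n]
  rw [← hI, hIμν, hI]

theorem measure_eq_of_integral_fourier_eq {μ ν : Measure (AddCircle T)} [IsFiniteMeasure μ]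
    [IsFiniteMeasure ν] (h : ∀ n : ℤ, ∫ y, fourier n y ∂μ = ∫ y, fourier n y ∂ν) : μ = ν := by
  refine ext_of_forall_integral_eq_of_IsFiniteMeasure fun f => ?_
  have := integral_eq_of_integral_fourier_eq h
    ⟨fun y => (f y : ℂ), Complex.continuous_ofReal.comp f.continuous⟩
  simp only [ContinuousMap.coe_mk] at this
  exact_mod_cast this

theorem integral_fourier_haarAddCircle (n : ℤ) :
    ∫ y, fourier n y ∂(haarAddCircle : Measure (AddCircle T)) = if n = 0 then 1 else 0 := by
  simpa [fourierCoeff, fourier_zero, Pi.single_apply, eq_comm] using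
    congr_fun (fourierCoeff_fourier (T := T) 0) (-n)

theorem integral_fourier_volume_one (n : ℤ) :
    ∫ y, fourier n y ∂(volume : Measure (AddCircle (1 : ℝ))) = if n = 0 then 1 else 0 := by
  rw [volume_eq_smul_haarAddCircle, ENNReal.ofReal_one, one_smul, integral_fourier_haarAddCircle]

end Fourier

section Folding

variable {T : ℝ}

theorem coe_vadd_zmultiples_op (γ : (AddSubgroup.zmultiples T).op) (x : ℝ) :
    ((γ +ᵥ x : ℝ) : AddCircle T) = x :=
  QuotientAddGroup.mk_add_of_mem x (AddSubgroup.mem_op.mp γ.2)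

theorem automorphize_coe {M : Type*} [TopologicalSpace M] [AddCommMonoid M] (f : ℝ → M)
    (x : ℝ) :
    automorphize f (x : AddCircle T) =
      ∑' γ : (AddSubgroup.zmultiples T).op, f (γ +ᵥ x) :=
  rfl

theorem automorphize_coe_eq_tsum_int [Fact (0 < T)] {M : Type*} [TopologicalSpace M]
    [AddCommMonoid M] (f : ℝ → M) (x : ℝ) :
    automorphize f (x : AddCircle T) = ∑' k : ℤ, f (x + k * T) := by
  let e : ℤ ≃ (AddSubgroup.zmultiples T).op :=
    (Equiv.ofBijective (fun k : ℤ => (⟨k • T, k, rfl⟩ : AddSubgroup.zmultiples T))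
      ⟨fun _ _ h => (zsmul_left_strictMono Fact.out).injective (congr_arg Subtype.val h),
       fun ⟨_, k, hk⟩ => ⟨k, Subtype.ext hk⟩⟩).trans (AddSubgroup.equivOp _)
  rw [automorphize_coe, ← e.tsum_eq]
  exact tsum_congr fun k => by rw [← zsmul_eq_mul]; rfl

theorem measurable_automorphize {f : ℝ → ℝ≥0∞} (hf : Measurable f) :
    Measurable (automorphize f : AddCircle T → ℝ≥0∞) := by
  rw [QuotientAddGroup.measurable_from_quotient]
  exact Measurable.tsum fun γ => hf.comp (measurable_const_vadd γ)

theorem integral_fourier_map_withDensity {g : ℝ → ℂ} (hg : Measurable g) (n : ℤ) :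
    ∫ y, fourier n y ∂(((volume : Measure ℝ).withDensity fun x => ‖g x‖ₑ ^ 2).map
        ((↑) : ℝ → AddCircle T)) =
      ∫ x : ℝ, fourier n (x : AddCircle T) * (conj (g x) * g x) := by
  rw [integral_map AddCircle.measurable_mk'.aemeasurable
      (map_continuous (fourier n)).aestronglyMeasurable,
    integral_withDensity_eq_integral_toReal_smul (by fun_prop)
      (.of_forall fun _ => ENNReal.pow_lt_top enorm_lt_top)]
  refine integral_congr_ae (.of_forall fun x => ?_)
  simp only [ENNReal.toReal_pow, toReal_enorm, Complex.real_smul, Complex.conj_mul']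
  push_cast
  ring

variable [hT : Fact (0 < T)]

theorem map_withDensity_eq_withDensity_automorphize {f : ℝ → ℝ≥0∞} (hf : Measurable f) :
    (volume.withDensity f).map ((↑) : ℝ → AddCircle T) =
      volume.withDensity (automorphize f) := by
  ext s hs
  have hmk : Measurable ((↑) : ℝ → AddCircle T) := AddCircle.measurable_mk'
  rw [Measure.map_apply hmk hs, withDensity_apply _ (hmk hs), withDensity_apply _ hs,
    ← lintegral_indicator (hmk hs), ← lintegral_indicator hs]
  calc ∫⁻ x, (((↑) : ℝ → AddCircle T) ⁻¹' s).indicator f x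
      = ∑' γ : (AddSubgroup.zmultiples T).op,
          ∫⁻ x in Ioc 0 (0 + T), (((↑) : ℝ → AddCircle T) ⁻¹' s).indicator f (γ +ᵥ x) :=
        (isAddFundamentalDomain_Ioc' hT.out 0).lintegral_eq_tsum'' _
    _ = ∫⁻ x in Ioc 0 (0 + T), ∑' γ : (AddSubgroup.zmultiples T).op,
          (((↑) : ℝ → AddCircle T) ⁻¹' s).indicator f (γ +ᵥ x) :=
        (lintegral_tsum fun γ =>
          ((hf.indicator (hmk hs)).comp (measurable_const_vadd γ)).aemeasurable).symm
    _ = ∫⁻ x in Ioc 0 (0 + T), s.indicator (automorphize f) (x : AddCircle T) := by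
        refine lintegral_congr fun x => ?_
        by_cases hx : (x : AddCircle T) ∈ s
        · simp [indicator_of_mem, hx, coe_vadd_zmultiples_op, automorphize_coe]
        · simp [indicator_of_notMem, hx, coe_vadd_zmultiples_op]
    _ = ∫⁻ y, s.indicator (automorphize f) y :=
        (AddCircle.measurePreserving_mk T 0).lintegral_comp
          ((measurable_automorphize hf).indicator hs)

theorem ae_coe_iff {p : AddCircle T → Prop} (hp : MeasurableSet {y | p y}) :
    (∀ᵐ x : ℝ, p x) ↔ ∀ᵐ y : AddCircle T, p y := by
  have hmk : Measurable ((↑) : ℝ → AddCircle T) := AddCircle.measurable_mk'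
  have hvol : (volume.restrict (Ioc 0 (0 + T))).map ((↑) : ℝ → AddCircle T) = volume :=
    (AddCircle.measurePreserving_mk T 0).map_eq
  rw [← ae_map_iff hmk.aemeasurable hp]
  constructor
  · intro h
    rw [← hvol]
    exact (Measure.restrict_le_self.absolutelyContinuous.map hmk).ae_le h
  · intro h
    exact (isAddFundamentalDomain_Ioc' hT.out 0 volume).absolutelyContinuous_map.ae_le (hvol ▸ h)

theorem withDensity_eq_volume_iff {F : AddCircle T → ℝ≥0∞} (hF : Measurable F) :
    volume.withDensity F = volume ↔ ∀ᵐ x : ℝ, F x = 1 := by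
  have h := withDensity_eq_iff_of_sigmaFinite (μ := (volume : Measure (AddCircle T)))
    hF.aemeasurable (aemeasurable_const (b := (1 : ℝ≥0∞)))
  rw [withDensity_const, one_smul] at h
  exact h.trans (ae_coe_iff (p := fun y => F y = 1) (hF (measurableSet_singleton 1))).symm

end Folding

end AddCircle

theorem automorphize_enorm_sq_coe_eq_one_iff {E : Type*} [NormedAddCommGroup E] (g : ℝ → E)
    (x : ℝ) :
    automorphize (fun x => ‖g x‖ₑ ^ 2) (x : AddCircle (1 : ℝ)) = 1 ↔
      ∑' k : ℤ, ‖g (x + k)‖ ^ 2 = 1 := by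
  have : Fact ((0 : ℝ) < 1) := ⟨one_pos⟩
  rw [AddCircle.automorphize_coe_eq_tsum_int]
  simp only [mul_one, enorm_eq_nnnorm, ← ENNReal.coe_pow, ← coe_nnnorm, ← NNReal.coe_pow]
  exact ENNReal.tsum_coe_eq_one_iff

theorem conj_modulation_mul_modulation (g : ℝ → ℂ) (k l : ℤ) (x : ℝ) :
    conj (Complex.exp (2 * π * Complex.I * k * x) * g x) *
      (Complex.exp (2 * π * Complex.I * l * x) * g x) =
    fourier (l - k) (x : AddCircle (1 : ℝ)) * (conj (g x) * g x) := by
  rw [fourier_coe_apply, map_mul, ← Complex.exp_conj, mul_mul_mul_comm, ← Complex.exp_add]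
  congr 2
  simp only [map_mul, Complex.conj_I, Complex.conj_ofReal, map_ofNat, map_intCast]
  push_cast
  ring

theorem stmt18 (g : ℝ → ℂ) (hgmeas : Measurable g)
    (hg2 : MemLp g 2 (volume : Measure ℝ)) :
    (∀ k l : ℤ,
      (∫ x : ℝ, conj (Complex.exp (2 * Real.pi * Complex.I * (k : ℂ) * (x : ℂ)) * g x) *
          (Complex.exp (2 * Real.pi * Complex.I * (l : ℂ) * (x : ℂ)) * g x) ∂volume) =
        if k = l then 1 else 0) ↔
    (∀ᵐ x : ℝ ∂volume, ∑' k : ℤ, ‖g (x + k)‖ ^ 2 = 1) := by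
  have : Fact ((0 : ℝ) < 1) := ⟨one_pos⟩
  set μ := ((volume : Measure ℝ).withDensity fun x => ‖g x‖ₑ ^ 2).map ((↑) : ℝ → AddCircle (1 : ℝ))
    with hμ
  have := hg2.isFiniteMeasure_withDensity_enorm_sq
  have hcoeff (k l : ℤ) :
      (if k = l then (1 : ℂ) else 0) =
        ∫ y, fourier (l - k) y ∂(volume : Measure (AddCircle (1 : ℝ))) := by
    rw [AddCircle.integral_fourier_volume_one]
    exact if_congr (sub_eq_zero.trans eq_comm).symm rfl rfl
  simp_rw [conj_modulation_mul_modulation, ← AddCircle.integral_fourier_map_withDensity hgmeas,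
    hcoeff]
  calc (∀ k l : ℤ, ∫ y, fourier (l - k) y ∂μ = ∫ y, fourier (l - k) y ∂volume)
      ↔ μ = volume :=
        ⟨fun h => AddCircle.measure_eq_of_integral_fourier_eq fun n => by simpa using h 0 n,
         fun h _ _ => by rw [h]⟩
    _ ↔ ∀ᵐ x : ℝ, automorphize (fun x => ‖g x‖ₑ ^ 2) (x : AddCircle (1 : ℝ)) = 1 := by
        rw [hμ, AddCircle.map_withDensity_eq_withDensity_automorphize (by fun_prop),
          AddCircle.withDensity_eq_volume_iff (AddCircle.measurable_automorphize (by fun_prop))]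
    _ ↔ ∀ᵐ x : ℝ, ∑' k : ℤ, ‖g (x + k)‖ ^ 2 = 1 :=
        Filter.eventually_congr (.of_forall fun x => automorphize_enorm_sq_coe_eq_one_iff g x)
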